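/- Let n be a natural number and N = 2n + 1. Let A be the unital associative ℝ-algebra presented by generators x_0, …, x_{N−1} subject to the relations: x_i² = 1 for all i < 2n and x_{N−1}² = −1; x_{2k}·x_{2k+1} = −x_{2k+1}·x_{2k} for every 0 ≤ k < n; x_{N−1} commutes with every generator; and x_i·x_j = x_j·x_i for every other pair i ≠ j among the first 2n generators (i.e., whenever {i,j} ⊆ {0,…,2n−1} is not of the form {2k, 2k+1}). Then A is isomorphic, as an ℝ-algebra, to the complex matrix algebra M_{2^n}(ℂ) regarded as an ℝ-algebra. (This algebra A is the twisted group algebra 𝒜_ℝ(μ_2^{2n+1}) attached to the quadratic form q_2^{2n+1}(x) = x_1x_2 + ⋯ + x_{2n−1}x_{2n} + x_{2n+1} over the field of two elements.) -/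

import Mathlib

/-- The relations presenting the twisted group algebra `𝒜_ℝ(μ₂^{2n+1})`:
generators `x_i` (`i : Fin (2n+1)`) with `x_i² = 1` for `i < 2n`, `x_{2n}² = -1`,
`x_{2k} x_{2k+1} = - x_{2k+1} x_{2k}` for `k < n`, the last generator `x_{2n}`
commuting with every generator, and `x_i x_j = x_j x_i` for every other pair `i ≠ j`
among the first `2n` generators. -/
inductive Rel14 (n : ℕ) :
    FreeAlgebra ℝ (Fin (2 * n + 1)) → FreeAlgebra ℝ (Fin (2 * n + 1)) → Prop
  | sq (i : Fin (2 * n + 1)) :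
      Rel14 n (FreeAlgebra.ι ℝ i * FreeAlgebra.ι ℝ i)
        (if (i : ℕ) < 2 * n then 1 else -1)
  | anti (k : ℕ) (hk : k < n) :
      Rel14 n
        (FreeAlgebra.ι ℝ (⟨2 * k, by omega⟩ : Fin (2 * n + 1)) *
          FreeAlgebra.ι ℝ (⟨2 * k + 1, by omega⟩ : Fin (2 * n + 1)))
        (-(FreeAlgebra.ι ℝ (⟨2 * k + 1, by omega⟩ : Fin (2 * n + 1)) *
          FreeAlgebra.ι ℝ (⟨2 * k, by omega⟩ : Fin (2 * n + 1))))
  | commLast (i : Fin (2 * n + 1)) :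
      Rel14 n
        (FreeAlgebra.ι ℝ (⟨2 * n, by omega⟩ : Fin (2 * n + 1)) * FreeAlgebra.ι ℝ i)
        (FreeAlgebra.ι ℝ i * FreeAlgebra.ι ℝ (⟨2 * n, by omega⟩ : Fin (2 * n + 1)))
  | comm (i j : Fin (2 * n + 1)) (hij : i ≠ j)
      (hi : (i : ℕ) < 2 * n) (hj : (j : ℕ) < 2 * n)
      (h : ¬∃ k : ℕ, ((i : ℕ) = 2 * k ∧ (j : ℕ) = 2 * k + 1) ∨
        ((i : ℕ) = 2 * k + 1 ∧ (j : ℕ) = 2 * k)) :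
      Rel14 n (FreeAlgebra.ι ℝ i * FreeAlgebra.ι ℝ j) (FreeAlgebra.ι ℝ j * FreeAlgebra.ι ℝ i)

/-!
Let `𝒜(n) = RingQuot (Rel14 n)` and put `u = x_{2n}`, `v = x_{2n+1}` in `𝒜(n+1)`. Since
`u² = v² = 1` and `uv = -vu`, the elements `½(1 + u)`, `½(v + uv)`, `½(v - uv)`, `½(1 - u)` form a
system of `2 × 2` matrix units, and the remaining generators (with `x_{2n+2}` taking over the role
of the central generator) generate a copy of `𝒜(n)` commuting with them. Hence
`𝒜(n+1) ≅ M₂(𝒜(n))`; the inverse sends `u`, `v` to the Pauli matrices `diag(1, -1)` and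
`[[0, 1], [1, 0]]` and every other generator to a scalar matrix. As `𝒜(0) = ℝ[x]/(x² + 1) ≅ ℂ`,
induction gives `𝒜(n) ≅ M_{2ⁿ}(ℂ)`.
-/

open Matrix

theorem Matrix.scalar_bijective {m α : Type*} [Unique m] [Fintype m] [DecidableEq m]
    [Semiring α] : Function.Bijective (scalar m : α → Matrix m m α) :=
  ⟨fun a b h => by simpa using congr_fun₂ h default default,
    fun M => ⟨M default default, by
      ext i j
      simp [Subsingleton.elim i default, Subsingleton.elim j default]⟩⟩

section MatrixUnits

variable {R m C B : Type*} [CommSemiring R] [Fintype m] [DecidableEq m]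
  [Semiring C] [Algebra R C] [Semiring B] [Algebra R B]

structure IsMatrixUnits (e : Matrix m m B) : Prop where
  mul_eq : ∀ i j k l, e i j * e k l = if j = k then e i l else 0
  sum_diag : ∑ i, e i i = 1

namespace IsMatrixUnits

variable {e : Matrix m m B}

def lift (he : IsMatrixUnits e) (θ : C →ₐ[R] B) (hθ : ∀ c i j, Commute (θ c) (e i j)) :
    Matrix m m C →ₐ[R] B :=
  AlgHom.ofLinearMap
    { toFun M := ∑ i, ∑ j, θ (M i j) * e i j
      map_add' M N := by
        simp only [Matrix.add_apply, map_add, add_mul, Finset.sum_add_distrib]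
      map_smul' r M := by
        simp only [Matrix.smul_apply, map_smul, smul_mul_assoc, Finset.smul_sum,
          RingHom.id_apply] }
    (by simpa [Matrix.one_apply, apply_ite θ] using he.sum_diag)
    (fun M N => by
      have key : ∀ a b i j k l, θ a * e i j * (θ b * e k l) =
          if j = k then θ (a * b) * e i l else 0 := by
        intro a b i j k l
        rw [mul_assoc, ← mul_assoc (e i j), ← (hθ b i j).eq, mul_assoc, he.mul_eq, ← mul_assoc,
          ← map_mul, mul_ite, mul_zero]
      simp only [LinearMap.coe_mk, AddHom.coe_mk, Matrix.mul_apply, map_sum, Finset.sum_mul,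
        Finset.mul_sum, key]
      simp only [Finset.sum_ite_eq', Finset.mem_univ, if_true]
      calc _ = ∑ i, ∑ k, ∑ l, θ (M i k * N k l) * e i l :=
            Finset.sum_congr rfl fun i _ => Finset.sum_comm
        _ = ∑ k, ∑ i, ∑ l, θ (M i k * N k l) * e i l := Finset.sum_comm
        _ = _ := Finset.sum_congr rfl fun k _ => Finset.sum_comm)

variable (he : IsMatrixUnits e) (θ : C →ₐ[R] B) (hθ : ∀ c i j, Commute (θ c) (e i j))
theorem lift_apply (M : Matrix m m C) : he.lift θ hθ M = ∑ i, ∑ j, θ (M i j) * e i j := rfl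

theorem lift_single (i j : m) (c : C) : he.lift θ hθ (single i j c) = θ c * e i j := by
  simp [lift_apply, single_apply, apply_ite θ, ite_and]

theorem lift_scalar (c : C) : he.lift θ hθ (scalar m c) = θ c := by
  simp [lift_apply, Matrix.diagonal_apply, apply_ite θ, ← Finset.mul_sum, he.sum_diag]

end IsMatrixUnits

end MatrixUnits

section PauliUnits

variable {K B C : Type*} [Field K] [Ring B] [Algebra K B] [Ring C] [Algebra K C]

variable (K) in
def pauliUnits (u v : B) : Matrix (Fin 2) (Fin 2) B :=
  (2⁻¹ : K) • !![1 + u, v + u * v; v - u * v, 1 - u]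

theorem pauliUnits_mul [CharZero K] {u v : B} (hu : u * u = 1) (hv : v * v = 1)
    (huv : u * v = -(v * u)) (i j k l : Fin 2) :
    pauliUnits K u v i j * pauliUnits K u v k l = if j = k then pauliUnits K u v i l else 0 := by
  have hu' (x : B) : u * (u * x) = x := by rw [← mul_assoc, hu, one_mul]
  have hv' (x : B) : v * (v * x) = x := by rw [← mul_assoc, hv, one_mul]
  have hvu : v * u = -(u * v) := by rw [huv, neg_neg]
  have hvu' (x : B) : v * (u * x) = -(u * (v * x)) := by
    rw [← mul_assoc, hvu, neg_mul, mul_assoc]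
  fin_cases i <;> fin_cases j <;> fin_cases k <;> fin_cases l <;>
    simp only [pauliUnits, Matrix.smul_apply, of_apply, cons_val', cons_val_zero, cons_val_one,
      empty_val', cons_val_fin_one, smul_mul_smul_comm, Fin.zero_eta, Fin.mk_one, Fin.isValue,
      one_ne_zero, zero_ne_one, ↓reduceIte] <;>
    · simp only [mul_add, add_mul, mul_sub, sub_mul, mul_one, one_mul, mul_neg,
        mul_assoc, hu, hv, hvu, hu', hvu']
      module

theorem isMatrixUnits_pauliUnits [CharZero K] {u v : B} (hu : u * u = 1) (hv : v * v = 1)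
    (huv : u * v = -(v * u)) : IsMatrixUnits (pauliUnits K u v) where
  mul_eq := pauliUnits_mul hu hv huv
  sum_diag := by
    simp only [Fin.sum_univ_two, pauliUnits, Matrix.smul_apply, of_apply, cons_val',
      cons_val_zero, cons_val_one, empty_val', cons_val_fin_one]
    module

theorem pauliUnits_sub [CharZero K] (u v : B) :
    pauliUnits K u v 0 0 - pauliUnits K u v 1 1 = u := by
  simp only [pauliUnits, Matrix.smul_apply, of_apply, cons_val', cons_val_zero, cons_val_one,
    empty_val', cons_val_fin_one]
  module

theorem pauliUnits_add [CharZero K] (u v : B) :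
    pauliUnits K u v 0 1 + pauliUnits K u v 1 0 = v := by
  simp only [pauliUnits, Matrix.smul_apply, of_apply, cons_val', cons_val_zero, cons_val_one,
    empty_val', cons_val_fin_one]
  module

theorem map_pauliUnits (f : B →ₐ[K] C) (u v : B) (i j : Fin 2) :
    f (pauliUnits K u v i j) = pauliUnits K (f u) (f v) i j := by
  fin_cases i <;> fin_cases j <;> simp [pauliUnits]

theorem Commute.pauliUnits {a u v : B} (hu : Commute a u) (hv : Commute a v) (i j : Fin 2) :
    Commute a (pauliUnits K u v i j) := by
  fin_cases i <;> fin_cases j <;>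
    simp only [_root_.pauliUnits, Matrix.smul_apply, of_apply, cons_val', cons_val_fin_one,
      empty_val'] <;>
    apply Commute.smul_right
  · exact (Commute.one_right a).add_right hu
  · exact hv.add_right (hu.mul_right hv)
  · exact hv.sub_right (hu.mul_right hv)
  · exact (Commute.one_right a).sub_right hu

end PauliUnits

section PauliMatrices

variable {C : Type*} [Ring C]

def pauliZ : Matrix (Fin 2) (Fin 2) C := !![1, 0; 0, -1]

def pauliX : Matrix (Fin 2) (Fin 2) C := !![0, 1; 1, 0]

theorem pauliZ_mul_self : (pauliZ : Matrix (Fin 2) (Fin 2) C) * pauliZ = 1 := by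
  simp [pauliZ, ← Matrix.one_fin_two]

theorem pauliX_mul_self : (pauliX : Matrix (Fin 2) (Fin 2) C) * pauliX = 1 := by
  simp [pauliX, ← Matrix.one_fin_two]

theorem pauliZ_mul_pauliX :
    (pauliZ : Matrix (Fin 2) (Fin 2) C) * pauliX = -(pauliX * pauliZ) := by
  simp [pauliZ, pauliX]

theorem commute_scalar_pauliZ (c : C) : Commute (scalar (Fin 2) c) pauliZ := by
  ext i j
  fin_cases i <;> fin_cases j <;> simp [pauliZ]

theorem commute_scalar_pauliX (c : C) : Commute (scalar (Fin 2) c) pauliX := by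
  ext i j
  fin_cases i <;> fin_cases j <;> simp [pauliX]

theorem pauliUnits_pauliZ_pauliX (K : Type*) [Field K] [CharZero K] [Algebra K C]
    (i j : Fin 2) : pauliUnits K (pauliZ : Matrix (Fin 2) (Fin 2) C) pauliX i j = single i j 1 := by
  ext a b
  fin_cases i <;> fin_cases j <;> fin_cases a <;> fin_cases b <;>
    simp [pauliUnits, pauliZ, pauliX, ← two_smul K (1 : C), smul_smul]

end PauliMatrices

noncomputable section

namespace TwistedMu2

/-- Equivalent to the existential in `Rel14.comm`, in a form `omega` can decide. -/
def Paired (i j : ℕ) : Prop := i ≠ j ∧ i / 2 = j / 2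

theorem exists_pair_iff_paired {i j : ℕ} :
    (∃ k : ℕ, (i = 2 * k ∧ j = 2 * k + 1) ∨ (i = 2 * k + 1 ∧ j = 2 * k)) ↔ Paired i j :=
  ⟨fun ⟨k, hk⟩ => by unfold Paired; omega, fun h => ⟨i / 2, by unfold Paired at h; omega⟩⟩

structure SatisfiesRels {B : Type*} [Ring B] (n : ℕ) (F : Fin (2 * n + 1) → B) : Prop where
  mul_self : ∀ i : Fin (2 * n + 1), F i * F i = if (i : ℕ) < 2 * n then 1 else -1
  anticomm : ∀ k (hk : k < n), F ⟨2 * k, by omega⟩ * F ⟨2 * k + 1, by omega⟩ =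
    -(F ⟨2 * k + 1, by omega⟩ * F ⟨2 * k, by omega⟩)
  commute : ∀ i j : Fin (2 * n + 1), ¬Paired i j → Commute (F i) (F j)

abbrev Alg (n : ℕ) := RingQuot (Rel14 n)

def gen (n : ℕ) (i : Fin (2 * n + 1)) : Alg n :=
  RingQuot.mkAlgHom ℝ (Rel14 n) (FreeAlgebra.ι ℝ i)

theorem satisfiesRels_gen (n : ℕ) : SatisfiesRels n (gen n) where
  mul_self i := by simpa [gen, apply_ite] using RingQuot.mkAlgHom_rel ℝ (Rel14.sq i)
  anticomm k hk := by simpa [gen] using RingQuot.mkAlgHom_rel ℝ (Rel14.anti k hk)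
  commute i j h := by
    have hlast (i : Fin (2 * n + 1)) : Commute (gen n ⟨2 * n, by omega⟩) (gen n i) := by
      show _ * _ = _ * _
      simpa [gen] using RingQuot.mkAlgHom_rel ℝ (Rel14.commLast i)
    rcases eq_or_ne i j with rfl | hij
    · exact Commute.refl _
    by_cases hi : (i : ℕ) < 2 * n
    · by_cases hj : (j : ℕ) < 2 * n
      · show _ * _ = _ * _
        simpa [gen] using RingQuot.mkAlgHom_rel ℝ
          (Rel14.comm i j hij hi hj (exists_pair_iff_paired.not.mpr h))
      · rw [show j = ⟨2 * n, by omega⟩ from Fin.ext (by dsimp only; omega)]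
        exact (hlast i).symm
    · rw [show i = ⟨2 * n, by omega⟩ from Fin.ext (by dsimp only; omega)]
      exact hlast j

section Presentation

variable {n : ℕ} {B : Type*} [Ring B] [Algebra ℝ B]

def lift {F : Fin (2 * n + 1) → B} (hF : SatisfiesRels n F) : Alg n →ₐ[ℝ] B :=
  RingQuot.liftAlgHom ℝ ⟨FreeAlgebra.lift ℝ F, fun _ _ h => by
    cases h with
    | sq i => simpa [apply_ite] using hF.mul_self i
    | anti k hk => simpa using hF.anticomm k hk
    | commLast i => simpa using (hF.commute _ i (by simp only [Paired]; omega)).eq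
    | comm i j _ _ _ h => simpa using (hF.commute i j (exists_pair_iff_paired.not.mp h)).eq⟩

@[simp]
theorem lift_gen {F : Fin (2 * n + 1) → B} (hF : SatisfiesRels n F) (i : Fin (2 * n + 1)) :
    lift hF (gen n i) = F i := by
  simp [lift, gen]

theorem algHom_ext {f g : Alg n →ₐ[ℝ] B} (h : ∀ i, f (gen n i) = g (gen n i)) : f = g :=
  RingQuot.ringQuot_ext' _ _ _ (FreeAlgebra.hom_ext (funext h))

theorem map_mem_of_forall_gen_mem (f : Alg n →ₐ[ℝ] B) {S : Subalgebra ℝ B}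
    (h : ∀ i, f (gen n i) ∈ S) (a : Alg n) : f a ∈ S := by
  obtain ⟨p, rfl⟩ := RingQuot.mkAlgHom_surjective ℝ (Rel14 n) a
  induction p using FreeAlgebra.induction with
  | grade0 r => simp
  | grade1 i => exact h i
  | mul x y hx hy => simpa using S.mul_mem hx hy
  | add x y hx hy => simpa using S.add_mem hx hy

end Presentation

section Indices

variable {n : ℕ}

/-! `𝒜(n)` sits inside `𝒜(n+1)` on the generators other than `x_{2n}` and `x_{2n+1}`, its central
generator `x_{2n}` becoming `x_{2n+2}`. -/

def raiseIdx (n : ℕ) (j : Fin (2 * n + 1)) : Fin (2 * (n + 1) + 1) :=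
  ⟨if (j : ℕ) < 2 * n then j else 2 * n + 2, by split_ifs <;> omega⟩

def lowerIdx (n : ℕ) (i : Fin (2 * (n + 1) + 1)) : Fin (2 * n + 1) :=
  ⟨min i (2 * n), by omega⟩

theorem lowerIdx_raiseIdx (j : Fin (2 * n + 1)) : lowerIdx n (raiseIdx n j) = j :=
  Fin.ext (by simp only [lowerIdx, raiseIdx]; grind)

theorem raiseIdx_lowerIdx {i : Fin (2 * (n + 1) + 1)} (h₀ : (i : ℕ) ≠ 2 * n)
    (h₁ : (i : ℕ) ≠ 2 * n + 1) : raiseIdx n (lowerIdx n i) = i :=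
  Fin.ext (by simp only [lowerIdx, raiseIdx]; grind)

theorem SatisfiesRels.comp_raiseIdx {B : Type*} [Ring B] {F : Fin (2 * (n + 1) + 1) → B}
    (hF : SatisfiesRels (n + 1) F) : SatisfiesRels n (F ∘ raiseIdx n) where
  mul_self j := by
    have : (raiseIdx n j : ℕ) < 2 * (n + 1) ↔ (j : ℕ) < 2 * n := by
      simp only [raiseIdx]; split_ifs <;> omega
    simp only [Function.comp_apply, hF.mul_self, this]
  anticomm k hk := by
    have h₀ : raiseIdx n ⟨2 * k, by omega⟩ = ⟨2 * k, by omega⟩ :=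
      Fin.ext (by simp only [raiseIdx]; grind)
    have h₁ : raiseIdx n ⟨2 * k + 1, by omega⟩ = ⟨2 * k + 1, by omega⟩ :=
      Fin.ext (by simp only [raiseIdx]; grind)
    simpa only [Function.comp_apply, h₀, h₁] using hF.anticomm k (by omega)
  commute i j h := hF.commute _ _ (by simp only [Paired, raiseIdx] at h ⊢; split_ifs <;> omega)

variable {C : Type*} [Ring C]

def extendPauli (F : Fin (2 * n + 1) → C) (i : Fin (2 * (n + 1) + 1)) :
    Matrix (Fin 2) (Fin 2) C :=
  if (i : ℕ) = 2 * n then pauliZ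
  else if (i : ℕ) = 2 * n + 1 then pauliX
  else scalar (Fin 2) (F (lowerIdx n i))

theorem extendPauli_raiseIdx (F : Fin (2 * n + 1) → C) (j : Fin (2 * n + 1)) :
    extendPauli F (raiseIdx n j) = scalar (Fin 2) (F j) := by
  rw [extendPauli, if_neg, if_neg, lowerIdx_raiseIdx] <;>
    simp only [raiseIdx] <;> split_ifs <;> omega

theorem SatisfiesRels.extendPauli {F : Fin (2 * n + 1) → C} (hF : SatisfiesRels n F) :
    SatisfiesRels (n + 1) (extendPauli F) where
  mul_self i := by
    unfold TwistedMu2.extendPauli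
    split_ifs <;> try omega
    · exact pauliZ_mul_self
    · exact pauliX_mul_self
    · rw [← map_mul, hF.mul_self, if_pos (by simp only [lowerIdx]; omega), map_one]
    · rw [← map_mul, hF.mul_self, if_neg (by simp only [lowerIdx]; omega), map_neg, map_one]
  anticomm k hk := by
    obtain hk | rfl := Nat.lt_succ_iff_lt_or_eq.mp hk
    · have h₀ : lowerIdx n ⟨2 * k, by omega⟩ = ⟨2 * k, by omega⟩ :=
        Fin.ext (by simp only [lowerIdx]; omega)
      have h₁ : lowerIdx n ⟨2 * k + 1, by omega⟩ = ⟨2 * k + 1, by omega⟩ :=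
        Fin.ext (by simp only [lowerIdx]; omega)
      simp only [TwistedMu2.extendPauli, if_neg (show 2 * k ≠ 2 * n by omega),
        if_neg (show 2 * k ≠ 2 * n + 1 by omega), if_neg (show 2 * k + 1 ≠ 2 * n by omega),
        if_neg (show 2 * k + 1 ≠ 2 * n + 1 by omega), h₀, h₁]
      rw [← map_mul, ← map_mul, hF.anticomm k hk, map_neg]
    · simpa [TwistedMu2.extendPauli] using pauliZ_mul_pauliX
  commute i j h := by
    unfold TwistedMu2.extendPauli
    simp only [Paired] at h
    split_ifs
    · exact Commute.refl _
    · omega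
    · exact (commute_scalar_pauliZ _).symm
    · omega
    · exact Commute.refl _
    · exact (commute_scalar_pauliX _).symm
    · exact commute_scalar_pauliZ _
    · exact commute_scalar_pauliX _
    · exact (hF.commute _ _ (by simp only [Paired, lowerIdx]; omega)).map _

end Indices

section Step

variable (n : ℕ)

def genZ : Alg (n + 1) := gen (n + 1) ⟨2 * n, by omega⟩

def genX : Alg (n + 1) := gen (n + 1) ⟨2 * n + 1, by omega⟩

theorem genZ_mul_self : genZ n * genZ n = 1 := by
  rw [genZ, (satisfiesRels_gen (n + 1)).mul_self, if_pos (by dsimp only; omega)]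

theorem genX_mul_self : genX n * genX n = 1 := by
  rw [genX, (satisfiesRels_gen (n + 1)).mul_self, if_pos (by dsimp only; omega)]

theorem genZ_mul_genX : genZ n * genX n = -(genX n * genZ n) :=
  (satisfiesRels_gen (n + 1)).anticomm n (by omega)

def embed : Alg n →ₐ[ℝ] Alg (n + 1) := lift (satisfiesRels_gen (n + 1)).comp_raiseIdx

theorem embed_gen (j : Fin (2 * n + 1)) : embed n (gen n j) = gen (n + 1) (raiseIdx n j) :=
  lift_gen _ j

theorem embed_mem_centralizer (a : Alg n) :
    embed n a ∈ Subalgebra.centralizer ℝ {genZ n, genX n} := by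
  refine map_mem_of_forall_gen_mem _ (fun j => ?_) a
  rw [embed_gen, Subalgebra.mem_centralizer_iff]
  rintro g (rfl | rfl) <;>
    exact ((satisfiesRels_gen (n + 1)).commute _ _
      (by simp only [Paired, raiseIdx]; split_ifs <;> omega)).eq

theorem commute_embed_pauliUnits (a : Alg n) (i j : Fin 2) :
    Commute (embed n a) (pauliUnits ℝ (genZ n) (genX n) i j) := by
  have h := (Subalgebra.mem_centralizer_iff ℝ).mp (embed_mem_centralizer n a)
  exact Commute.pauliUnits (h _ (by simp)).symm (h _ (by simp)).symm i j

def ofMatrix : Matrix (Fin 2) (Fin 2) (Alg n) →ₐ[ℝ] Alg (n + 1) :=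
  (isMatrixUnits_pauliUnits (genZ_mul_self n) (genX_mul_self n) (genZ_mul_genX n)).lift
    (embed n) (commute_embed_pauliUnits n)

def toMatrix : Alg (n + 1) →ₐ[ℝ] Matrix (Fin 2) (Fin 2) (Alg n) :=
  lift (satisfiesRels_gen n).extendPauli

theorem toMatrix_genZ : toMatrix n (genZ n) = pauliZ := by
  simp [toMatrix, genZ, extendPauli]

theorem toMatrix_genX : toMatrix n (genX n) = pauliX := by
  simp [toMatrix, genX, extendPauli]

theorem toMatrix_embed (a : Alg n) : toMatrix n (embed n a) = scalar (Fin 2) a := by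
  change ((toMatrix n).comp (embed n)) a = scalarAlgHom (Fin 2) ℝ a
  congr 1
  exact algHom_ext fun j => by simp [embed_gen, toMatrix, extendPauli_raiseIdx]

theorem toMatrix_ofMatrix (M : Matrix (Fin 2) (Fin 2) (Alg n)) :
    toMatrix n (ofMatrix n M) = M := by
  simp only [ofMatrix, IsMatrixUnits.lift_apply, map_sum, map_mul, toMatrix_embed,
    map_pauliUnits, toMatrix_genZ, toMatrix_genX, pauliUnits_pauliZ_pauliX, scalar_apply,
    ← smul_eq_diagonal_mul, smul_single, smul_eq_mul, mul_one]
  exact (matrix_eq_sum_single M).symm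

theorem ofMatrix_pauliZ : ofMatrix n pauliZ = genZ n := by
  have h := pauliUnits_sub (K := ℝ) (pauliZ : Matrix (Fin 2) (Fin 2) (Alg n)) pauliX
  rw [pauliUnits_pauliZ_pauliX, pauliUnits_pauliZ_pauliX] at h
  rw [← h, map_sub, ofMatrix, IsMatrixUnits.lift_single, IsMatrixUnits.lift_single, map_one,
    one_mul, one_mul, pauliUnits_sub]

theorem ofMatrix_pauliX : ofMatrix n pauliX = genX n := by
  have h := pauliUnits_add (K := ℝ) (pauliZ : Matrix (Fin 2) (Fin 2) (Alg n)) pauliX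
  rw [pauliUnits_pauliZ_pauliX, pauliUnits_pauliZ_pauliX] at h
  rw [← h, map_add, ofMatrix, IsMatrixUnits.lift_single, IsMatrixUnits.lift_single, map_one,
    one_mul, one_mul, pauliUnits_add]

theorem ofMatrix_comp_toMatrix : (ofMatrix n).comp (toMatrix n) = AlgHom.id ℝ (Alg (n + 1)) := by
  refine algHom_ext fun i => ?_
  simp only [AlgHom.comp_apply, AlgHom.id_apply, toMatrix, lift_gen, extendPauli]
  split_ifs with h₀ h₁
  · exact (ofMatrix_pauliZ n).trans (congrArg _ (Fin.ext h₀.symm))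
  · exact (ofMatrix_pauliX n).trans (congrArg _ (Fin.ext h₁.symm))
  · rw [ofMatrix, IsMatrixUnits.lift_scalar, embed_gen, raiseIdx_lowerIdx h₀ h₁]

def equivMatrix : Alg (n + 1) ≃ₐ[ℝ] Matrix (Fin 2) (Fin 2) (Alg n) :=
  AlgEquiv.ofAlgHom (toMatrix n) (ofMatrix n) (AlgHom.ext (toMatrix_ofMatrix n))
    (ofMatrix_comp_toMatrix n)

end Step

def equivComplex : Alg 0 ≃ₐ[ℝ] ℂ :=
  AlgEquiv.ofAlgHom
    (lift (F := fun _ => Complex.I)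
      { mul_self := fun _ => by simp
        anticomm := fun k hk => absurd hk k.not_lt_zero
        commute := fun _ _ _ => Commute.refl _ })
    (Complex.liftAux (gen 0 0) (by simpa using (satisfiesRels_gen 0).mul_self 0))
    (Complex.algHom_ext (by simp))
    (algHom_ext fun i => by fin_cases i; simp)

end TwistedMu2

end

theorem twisted_mu2_odd_iso_matrix_complex (n : ℕ) :
    Nonempty (RingQuot (Rel14 n) ≃ₐ[ℝ] Matrix (Fin (2 ^ n)) (Fin (2 ^ n)) ℂ) := by
  induction n with
  | zero =>
    exact ⟨TwistedMu2.equivComplex.trans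
      (AlgEquiv.ofBijective (scalarAlgHom (Fin 1) ℝ) Matrix.scalar_bijective)⟩
  | succ n ih =>
    obtain ⟨e⟩ := ih
    exact ⟨(TwistedMu2.equivMatrix n).trans <| e.mapMatrix.trans <|
      (Matrix.compAlgEquiv (Fin 2) (Fin (2 ^ n)) ℂ ℝ).trans <|
      Matrix.reindexAlgEquiv ℝ ℂ (finProdFinEquiv.trans (finCongr (by ring)))⟩
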